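/- Let G be a graph, k ≥ 1, F(G) the union of all tree components of G, and cmp(F(G)) the number of tree components. Then M_k(G) has at least one circuit if and only if k ≤ Δ(G) + cmp(F(G)). -/

import Mathlib

open scoped Classical

/-- A finite multigraph: loops and parallel edges allowed. -/
structure Multigraph where
  V : Type
  E : Type
  [fintypeV : Fintype V]
  [fintypeE : Fintype E]
  ends : E → Sym2 V

attribute [instance] Multigraph.fintypeV Multigraph.fintypeE

namespace Multigraph

variable (G : Multigraph)

/-- Vertex support of an edge set: vertices incident to some edge of `X`. -/
noncomputable def supp (X : Finset G.E) : Finset G.V :=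
  Finset.univ.filter (fun v => ∃ e ∈ X, v ∈ G.ends e)

/-- `Δ` of the subgraph induced by the edge set `X`. -/
noncomputable def delta (X : Finset G.E) : ℤ := (X.card : ℤ) - (G.supp X).card

/-- `Δ(G) = |E(G)| - |V(G)|`. -/
noncomputable def deltaG : ℤ := (Fintype.card G.E : ℤ) - (Fintype.card G.V : ℤ)

/-- Degree of `v` in the edge set `X`: loops count twice. -/
noncomputable def degIn (X : Finset G.E) (v : G.V) : ℕ :=
  ∑ e ∈ X, (if G.ends e = Sym2.mk v v then 2 else if v ∈ G.ends e then 1 else 0)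

/-- `u` and `v` are joined by an edge of `X`. -/
def adjIn (X : Finset G.E) (u v : G.V) : Prop := ∃ e ∈ X, G.ends e = Sym2.mk u v

/-- Reachability using only edges of `X`. -/
def reachIn (X : Finset G.E) : G.V → G.V → Prop :=
  Relation.ReflTransGen (G.adjIn X)

/-- The edge set `X` induces a connected subgraph. -/
def ConnSet (X : Finset G.E) : Prop :=
  X.Nonempty ∧ ∀ u ∈ G.supp X, ∀ v ∈ G.supp X, G.reachIn X u v

/-- Edges of the component of the subgraph `(V, X)` containing vertex `v`. -/
noncomputable def compEdges (X : Finset G.E) (v : G.V) : Finset G.E :=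
  X.filter (fun f => ∃ u ∈ G.ends f, G.reachIn X v u)

/-- Vertices of the component of `v` in the graph `(V, X)` (all vertices kept). -/
noncomputable def compVerts (X : Finset G.E) (v : G.V) : Finset G.V :=
  Finset.univ.filter (fun u => G.reachIn X v u)

/-- `C` is (the edge set of) a cycle: connected, every vertex of degree 2. -/
def IsCycleSet (C : Finset G.E) : Prop :=
  G.ConnSet C ∧ ∀ v ∈ G.supp C, G.degIn C v = 2

/-- `T` induces a tree. -/
def IsTreeSet (T : Finset G.E) : Prop := G.ConnSet T ∧ G.delta T = -1

/-- The component of `v` in `(V, X)` is a tree (possibly a single vertex). -/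
def IsTreeCompAt (X : Finset G.E) (v : G.V) : Prop :=
  (G.compEdges X v).card + 1 = (G.compVerts X v).card

/-- The number of tree components of the graph `(V, X)`. -/
noncomputable def treeCount (X : Finset G.E) : ℕ :=
  (((Finset.univ : Finset G.V).filter (fun v => G.IsTreeCompAt X v)).image
    (fun v => G.compVerts X v)).card

/-- The graph `G` has no isolated vertices. -/
def NoIso : Prop := ∀ v : G.V, ∃ e : G.E, v ∈ G.ends e

/-- The graph `G` has no leaves. -/
def NoLeaf : Prop := ∀ v : G.V, G.degIn Finset.univ v ≠ 1

/-- The graph `G` is connected. -/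
def GConn : Prop := Nonempty G.V ∧ ∀ u v : G.V, G.reachIn Finset.univ u v

/-- `G` is a bicycle: connected, leafless, with `Δ(G) = 1`. -/
def IsBicycle : Prop := G.GConn ∧ G.NoLeaf ∧ G.deltaG = 1

/-- One round of deleting all edges incident to a leaf. -/
noncomputable def pruneStep (X : Finset G.E) : Finset G.E :=
  X.filter (fun e => ∀ v ∈ G.ends e, G.degIn X v ≠ 1)

/-- Edge set obtained from `G` by repeatedly deleting leaves until none remain. -/
noncomputable def kernelSet : Finset G.E :=
  G.pruneStep^[Fintype.card G.E] Finset.univ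

/-- `Δ` of the component of `G` containing `v`. -/
noncomputable def compDelta (v : G.V) : ℤ :=
  ((G.compEdges Finset.univ v).card : ℤ) - ((G.compVerts Finset.univ v).card : ℤ)

/-- The core `[G]`: union of the kernels of the components `A` with `Δ(A) ≥ 1`. -/
noncomputable def coreSet : Finset G.E :=
  G.kernelSet.filter (fun e => ∀ v ∈ G.ends e, 1 ≤ G.compDelta v)

/-- `P` is the edge set of an `(x,y)`-path. -/
def IsPathSet (P : Finset G.E) (x y : G.V) : Prop :=
  G.ConnSet P ∧ x ≠ y ∧ x ∈ G.supp P ∧ y ∈ G.supp P ∧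
  G.degIn P x = 1 ∧ G.degIn P y = 1 ∧
  ∀ v ∈ G.supp P, v ≠ x → v ≠ y → G.degIn P v = 2

/-- `C` induces a bicycle subgraph: connected, leafless, `Δ = 1`. -/
def IsBicycleSet (C : Finset G.E) : Prop :=
  G.ConnSet C ∧ (∀ v ∈ G.supp C, G.degIn C v ≠ 1) ∧ G.delta C = 1

/-- Circuits of the `k`-circular matroid `M_k(G)`: minimal nonempty edge sets `C`
with `|C| = |V(G⟨C⟩)| + k`, i.e. `Δ(G⟨C⟩) = k`. -/
def IsCircuitSet (k : ℕ) (C : Finset G.E) : Prop :=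
  (C.Nonempty ∧ G.delta C = (k : ℤ)) ∧
  ∀ D ⊂ C, ¬ (D.Nonempty ∧ G.delta D = (k : ℤ))

/-- Independent sets of `M_k(G)`. -/
def Indep (k : ℕ) (I : Finset G.E) : Prop := ∀ C ⊆ I, ¬ G.IsCircuitSet k C

/-- Bases of `M_k(G)`: maximal independent sets. -/
def IsBase (k : ℕ) (B : Finset G.E) : Prop :=
  G.Indep k B ∧ ∀ B' : Finset G.E, G.Indep k B' → B ⊆ B' → B' = B

/-- The matroid `M_k(G)` is connected: at least two elements and every two
elements lie on a common circuit. -/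
def MConn (k : ℕ) : Prop :=
  2 ≤ Fintype.card G.E ∧
  ∀ a b : G.E, ∃ C : Finset G.E, G.IsCircuitSet k C ∧ a ∈ C ∧ b ∈ C

end Multigraph

/-!
Split `G` into its components `S` with edge sets `E_S`. The cyclomatic number
`|X| + c(V, X) - |V|` of a spanning subgraph vanishes at `X = ∅` and is monotone in `X`,
because deleting an edge raises the number of components by at most one. Hence a nonempty
`X ⊆ E_S` has `Δ(X) ≤ cyc(X) - 1 ≤ cyc(E_S) - 1 = |E_S| - |S|`, and `|E_S| - |S| ≥ -1` with
equality exactly when `S` is a tree. Summing over the components, every edge set satisfies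
`Δ ≤ ∑ max(|E_S| - |S|, 0) = Δ(G) + cmp(F(G))`, and the edges of the non-tree components
attain this bound. Conversely, deleting an edge lowers `Δ` by at most one, so a minimal edge
set with `Δ ≥ k ≥ 1` has `Δ = k` and is a circuit of `M_k(G)`.
-/

lemma Finset.card_eq_sum_card_inter_of_existsUnique {ι α : Type*} {s : Finset α} {I : Finset ι}
    {f : ι → Finset α} (h : ∀ a ∈ s, ∃! i, i ∈ I ∧ a ∈ f i) :
    s.card = ∑ i ∈ I, (s ∩ f i).card := by
  calc s.card = ∑ a ∈ s, (I.filter (a ∈ f ·)).card := by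
        rw [Finset.card_eq_sum_ones]
        refine Finset.sum_congr rfl fun a ha => ?_
        obtain ⟨i, hi, huniq⟩ := h a ha
        refine (Finset.card_eq_one.mpr ⟨i, Finset.ext fun j => ?_⟩).symm
        simp only [Finset.mem_filter, Finset.mem_singleton]
        exact ⟨fun hj => huniq j hj, fun hj => hj ▸ hi⟩
    _ = ∑ i ∈ I, (s ∩ f i).card := by
        simp only [Finset.card_filter]
        rw [Finset.sum_comm]
        simp

namespace Multigraph

variable {G : Multigraph} {X : Finset G.E} {a b u v w : G.V} {e : G.E}

lemma mem_supp_iff : v ∈ G.supp X ↔ ∃ e ∈ X, v ∈ G.ends e := by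
  simp [supp]

lemma mem_compVerts_iff : u ∈ G.compVerts X v ↔ G.reachIn X v u := by
  simp [compVerts]

lemma self_mem_compVerts : v ∈ G.compVerts X v :=
  mem_compVerts_iff.mpr .refl

lemma exists_ends_eq (e : G.E) : ∃ a b, G.ends e = s(a, b) :=
  (Sym2.exists (f := fun z => G.ends e = z)).mp ⟨_, rfl⟩

lemma reachIn_symm (h : G.reachIn X u v) : G.reachIn X v u :=
  have : Std.Symm (G.adjIn X) :=
    ⟨fun _ _ ⟨e, he, hends⟩ => ⟨e, he, hends.trans Sym2.eq_swap⟩⟩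
  Std.Symm.symm (r := Relation.ReflTransGen (G.adjIn X)) _ _ h

lemma reachIn_mono {Y : Finset G.E} (hXY : X ⊆ Y) (h : G.reachIn X u v) : G.reachIn Y u v :=
  Relation.ReflTransGen.mono (fun _ _ ⟨e, he, hends⟩ => ⟨e, hXY he, hends⟩) u v h

lemma reachIn_of_mem_ends (he : e ∈ X) (hu : u ∈ G.ends e) (hw : w ∈ G.ends e) :
    G.reachIn X u w := by
  obtain ⟨a, b, hab⟩ := exists_ends_eq e
  have hadj : G.reachIn X a b := .single ⟨e, he, hab⟩
  rw [hab, Sym2.mem_iff] at hu hw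
  rcases hu with rfl | rfl <;> rcases hw with rfl | rfl
  exacts [.refl, hadj, reachIn_symm hadj, .refl]

lemma compVerts_eq_of_reachIn (h : G.reachIn X v u) : G.compVerts X v = G.compVerts X u := by
  ext w
  simp only [mem_compVerts_iff]
  exact ⟨(reachIn_symm h).trans, h.trans⟩

lemma compVerts_eq_singleton (hv : v ∉ G.supp X) : G.compVerts X v = {v} := by
  ext u
  rw [mem_compVerts_iff, Finset.mem_singleton]
  refine ⟨fun h => ?_, fun h => h ▸ .refl⟩
  rcases h.cases_head with h | ⟨w, ⟨e, he, hends⟩, -⟩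
  · exact h.symm
  · exact absurd (mem_supp_iff.mpr ⟨e, he, hends ▸ Sym2.mem_mk_left _ _⟩) hv

lemma reachIn_erase (hab : G.ends e = s(a, b)) (ha : ¬ G.reachIn (X.erase e) v a)
    (hb : ¬ G.reachIn (X.erase e) v b) (h : G.reachIn X v u) : G.reachIn (X.erase e) v u := by
  induction h with
  | refl => exact .refl
  | tail _ hstep ih =>
    obtain ⟨f, hf, hends⟩ := hstep
    by_cases hfe : f = e
    · subst hfe
      rcases Sym2.eq_iff.mp (hab.symm.trans hends) with ⟨rfl, -⟩ | ⟨-, rfl⟩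
      exacts [absurd ih ha, absurd ih hb]
    · exact ih.tail ⟨f, Finset.mem_erase.mpr ⟨hfe, hf⟩, hends⟩

lemma supp_mono {Y : Finset G.E} (h : X ⊆ Y) : G.supp X ⊆ G.supp Y := fun _ hv =>
  let ⟨e, he, hve⟩ := mem_supp_iff.mp hv
  mem_supp_iff.mpr ⟨e, h he, hve⟩

lemma delta_empty : G.delta ∅ = 0 := by
  simp [delta, supp]

lemma delta_sub_one_le_delta_erase (he : e ∈ X) : G.delta X - 1 ≤ G.delta (X.erase e) := by
  have := Finset.card_erase_add_one he
  have := Finset.card_le_card (supp_mono (G := G) (Finset.erase_subset e X))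
  unfold delta
  omega

noncomputable def components (X : Finset G.E) : Finset (Finset G.V) :=
  Finset.univ.image (G.compVerts X)

noncomputable def cyclomatic (X : Finset G.E) : ℤ :=
  X.card + (G.components X).card - Fintype.card G.V

lemma compVerts_mem_components : G.compVerts X v ∈ G.components X :=
  Finset.mem_image_of_mem _ (Finset.mem_univ v)

/-- Deleting `e = ab` only splits the component of `a` into those of `a` and `b`. -/
lemma card_components_erase_le (X : Finset G.E) (e : G.E) :
    (G.components (X.erase e)).card ≤ (G.components X).card + 1 := by
  obtain ⟨a, b, hab⟩ := exists_ends_eq e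
  have hsub : G.components (X.erase e) ⊆
      {G.compVerts (X.erase e) a, G.compVerts (X.erase e) b} ∪
        (G.components X).erase (G.compVerts X a) := by
    intro S hS
    obtain ⟨v, -, rfl⟩ := Finset.mem_image.mp hS
    by_cases ha : G.reachIn (X.erase e) v a
    · simp [compVerts_eq_of_reachIn ha]
    by_cases hb : G.reachIn (X.erase e) v b
    · simp [compVerts_eq_of_reachIn hb]
    have hcomp : G.compVerts (X.erase e) v = G.compVerts X v := by
      ext u
      simp only [mem_compVerts_iff]
      exact ⟨reachIn_mono (Finset.erase_subset e X), reachIn_erase hab ha hb⟩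
    rw [hcomp]
    refine Finset.mem_union_right _
      (Finset.mem_erase.mpr ⟨fun h => ha ?_, compVerts_mem_components⟩)
    exact reachIn_erase hab ha hb (mem_compVerts_iff.mp (h ▸ self_mem_compVerts))
  have hpair :=
    Finset.card_le_two (a := G.compVerts (X.erase e) a) (b := G.compVerts (X.erase e) b)
  have herase := Finset.card_erase_of_mem (compVerts_mem_components (X := X) (v := a))
  have hpos := Finset.card_pos.mpr ⟨_, compVerts_mem_components (X := X) (v := a)⟩
  have := (Finset.card_le_card hsub).trans (Finset.card_union_le _ _)
  omega

lemma cyclomatic_erase_le (he : e ∈ X) : G.cyclomatic (X.erase e) ≤ G.cyclomatic X := by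
  have := card_components_erase_le X e
  have := Finset.card_erase_add_one he
  unfold cyclomatic
  omega

lemma cyclomatic_mono {Y : Finset G.E} (h : X ⊆ Y) : G.cyclomatic X ≤ G.cyclomatic Y := by
  induction Y using Finset.strongInduction with
  | H Y ih =>
    obtain rfl | hXY := h.eq_or_ssubset
    · rfl
    obtain ⟨e, heY, heX⟩ := Finset.exists_of_ssubset hXY
    exact (ih _ (Finset.erase_ssubset heY) (Finset.subset_erase.mpr ⟨h, heX⟩)).trans
      (cyclomatic_erase_le heY)

lemma cyclomatic_empty : G.cyclomatic ∅ = 0 := by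
  have hcomp : G.components ∅ = Finset.univ.image ({·}) :=
    Finset.image_congr fun v _ => compVerts_eq_singleton (by simp [supp])
  rw [cyclomatic, hcomp, Finset.card_image_of_injective _ Finset.singleton_injective]
  simp

lemma cyclomatic_nonneg (X : Finset G.E) : 0 ≤ G.cyclomatic X :=
  cyclomatic_empty.symm.le.trans (cyclomatic_mono (Finset.empty_subset X))

/-- Each vertex outside `supp X` is a component of its own, and the edges of `X` lie in
at least one more. -/
lemma delta_add_one_le_cyclomatic (hX : X.Nonempty) : G.delta X + 1 ≤ G.cyclomatic X := by
  obtain ⟨e, he⟩ := hX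
  obtain ⟨a, b, hab⟩ := exists_ends_eq e
  have ha : a ∈ G.supp X := mem_supp_iff.mpr ⟨e, he, hab ▸ Sym2.mem_mk_left a b⟩
  have hsub : insert (G.compVerts X a) ((Finset.univ \ G.supp X).image ({·})) ⊆
      G.components X := by
    refine Finset.insert_subset compVerts_mem_components fun S hS => ?_
    obtain ⟨v, hv, rfl⟩ := Finset.mem_image.mp hS
    rw [← compVerts_eq_singleton (Finset.mem_sdiff.mp hv).2]
    exact compVerts_mem_components
  have hnot : G.compVerts X a ∉ (Finset.univ \ G.supp X).image ({·}) := by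
    rintro hmem
    obtain ⟨v, hv, hva⟩ := Finset.mem_image.mp hmem
    have : a = v := Finset.mem_singleton.mp (hva ▸ self_mem_compVerts)
    exact (Finset.mem_sdiff.mp hv).2 (this ▸ ha)
  have hcard := Finset.card_le_card hsub
  rw [Finset.card_insert_of_notMem hnot,
    Finset.card_image_of_injective _ Finset.singleton_injective,
    Finset.card_sdiff_of_subset (Finset.subset_univ _), Finset.card_univ] at hcard
  have := Finset.card_le_univ (G.supp X)
  unfold delta cyclomatic
  omega

noncomputable def edgesOf (S : Finset G.V) : Finset G.E :=
  Finset.univ.filter fun e => ∃ u ∈ G.ends e, u ∈ S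

section ComponentOfG

variable {S : Finset G.V}

lemma mem_iff_compVerts_eq (hS : S ∈ G.components Finset.univ) :
    v ∈ S ↔ G.compVerts Finset.univ v = S := by
  obtain ⟨w, -, rfl⟩ := Finset.mem_image.mp hS
  exact ⟨fun hv => (compVerts_eq_of_reachIn (mem_compVerts_iff.mp hv)).symm,
    fun h => h ▸ self_mem_compVerts⟩

lemma mem_iff_reachIn (hS : S ∈ G.components Finset.univ) (hv : v ∈ S) :
    u ∈ S ↔ G.reachIn Finset.univ v u := by
  rw [← mem_compVerts_iff, (mem_iff_compVerts_eq hS).mp hv]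

lemma nonempty_of_mem_components (hS : S ∈ G.components Finset.univ) : S.Nonempty := by
  obtain ⟨w, -, rfl⟩ := Finset.mem_image.mp hS
  exact ⟨w, self_mem_compVerts⟩

lemma mem_of_mem_edgesOf (hS : S ∈ G.components Finset.univ) (he : e ∈ G.edgesOf S)
    (hw : w ∈ G.ends e) : w ∈ S := by
  obtain ⟨u, hu, huS⟩ := (Finset.mem_filter.mp he).2
  rw [mem_iff_compVerts_eq hS] at huS ⊢
  rw [← huS, compVerts_eq_of_reachIn (reachIn_of_mem_ends (Finset.mem_univ e) hu hw)]

lemma supp_inter_edgesOf (hS : S ∈ G.components Finset.univ) (C : Finset G.E) :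
    G.supp (C ∩ G.edgesOf S) = G.supp C ∩ S := by
  ext v
  simp only [Finset.mem_inter, mem_supp_iff]
  constructor
  · rintro ⟨e, ⟨heC, heS⟩, hv⟩
    exact ⟨⟨e, heC, hv⟩, mem_of_mem_edgesOf hS heS hv⟩
  · rintro ⟨⟨e, heC, hv⟩, hvS⟩
    exact ⟨e, ⟨heC, Finset.mem_filter.mpr ⟨Finset.mem_univ e, v, hv, hvS⟩⟩, hv⟩

lemma supp_edgesOf (hS : S ∈ G.components Finset.univ) (hE : (G.edgesOf S).Nonempty) :
    G.supp (G.edgesOf S) = S := by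
  rw [← Finset.univ_inter (G.edgesOf S), supp_inter_edgesOf hS, Finset.inter_eq_right]
  intro v hv
  by_contra hvsupp
  have hSv : S = {v} :=
    ((mem_iff_compVerts_eq hS).mp hv).symm.trans (compVerts_eq_singleton hvsupp)
  obtain ⟨f, hf⟩ := hE
  obtain ⟨u, hu, huS⟩ := (Finset.mem_filter.mp hf).2
  rw [hSv, Finset.mem_singleton] at huS
  exact hvsupp (mem_supp_iff.mpr ⟨f, Finset.mem_univ f, huS ▸ hu⟩)

lemma reachIn_edgesOf (hS : S ∈ G.components Finset.univ) (hv : v ∈ S)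
    (h : G.reachIn Finset.univ v u) :
    G.reachIn (G.edgesOf S) v u := by
  induction h with
  | refl => exact .refl
  | tail hvw hstep ih =>
    obtain ⟨f, -, hends⟩ := hstep
    have hw : _ ∈ S := (mem_iff_reachIn hS hv).mpr hvw
    have hf : f ∈ G.edgesOf S :=
      Finset.mem_filter.mpr ⟨Finset.mem_univ f, _, hends ▸ Sym2.mem_mk_left _ _, hw⟩
    exact ih.tail ⟨f, hf, hends⟩

lemma components_edgesOf (hS : S ∈ G.components Finset.univ) :
    G.components (G.edgesOf S) = insert S ((Finset.univ \ S).image ({·})) := by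
  have hcomp : ∀ v, G.compVerts (G.edgesOf S) v = if v ∈ S then S else {v} := by
    intro v
    split_ifs with hv
    · ext u
      rw [mem_compVerts_iff, mem_iff_reachIn hS hv]
      exact ⟨reachIn_mono (Finset.subset_univ _), reachIn_edgesOf hS hv⟩
    · refine compVerts_eq_singleton fun hsupp => hv ?_
      obtain ⟨e, he, hve⟩ := mem_supp_iff.mp hsupp
      exact mem_of_mem_edgesOf hS he hve
  ext T
  simp only [components, Finset.mem_image, Finset.mem_univ, true_and, hcomp, Finset.mem_insert,
    Finset.mem_sdiff]
  constructor
  · rintro ⟨v, rfl⟩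
    split_ifs with hv
    exacts [Or.inl rfl, Or.inr ⟨v, hv, rfl⟩]
  · rintro (rfl | ⟨v, hv, rfl⟩)
    · obtain ⟨v, hv⟩ := nonempty_of_mem_components hS
      exact ⟨v, if_pos hv⟩
    · exact ⟨v, if_neg hv⟩

lemma cyclomatic_edgesOf (hS : S ∈ G.components Finset.univ) :
    G.cyclomatic (G.edgesOf S) = (G.edgesOf S).card + 1 - S.card := by
  have hnot : S ∉ (Finset.univ \ S).image ({·}) := by
    rintro hmem
    obtain ⟨v, hv, rfl⟩ := Finset.mem_image.mp hmem
    exact (Finset.mem_sdiff.mp hv).2 (Finset.mem_singleton_self v)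
  rw [cyclomatic, components_edgesOf hS, Finset.card_insert_of_notMem hnot,
    Finset.card_image_of_injective _ Finset.singleton_injective,
    Finset.card_sdiff_of_subset (Finset.subset_univ _), Finset.card_univ]
  have := Finset.card_le_univ S
  omega

lemma delta_le_of_subset_edgesOf (hS : S ∈ G.components Finset.univ) (hX : X ⊆ G.edgesOf S)
    (hne : X.Nonempty) :
    G.delta X ≤ (G.edgesOf S).card - S.card := by
  have := (delta_add_one_le_cyclomatic hne).trans (cyclomatic_mono hX)
  rw [cyclomatic_edgesOf hS] at this
  omega

end ComponentOfG

lemma existsUnique_mem_components (v : G.V) :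
    ∃! S, S ∈ G.components Finset.univ ∧ v ∈ S :=
  ⟨_, ⟨compVerts_mem_components, self_mem_compVerts⟩,
    fun _ ⟨hT, hv⟩ => ((mem_iff_compVerts_eq hT).mp hv).symm⟩

lemma existsUnique_mem_edgesOf (e : G.E) :
    ∃! S, S ∈ G.components Finset.univ ∧ e ∈ G.edgesOf S := by
  obtain ⟨a, b, hab⟩ := exists_ends_eq e
  have ha : a ∈ G.ends e := hab ▸ Sym2.mem_mk_left a b
  refine ⟨_, ⟨compVerts_mem_components, Finset.mem_filter.mpr ⟨Finset.mem_univ e, a, ha,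
    self_mem_compVerts⟩⟩, fun T ⟨hT, he⟩ => ?_⟩
  exact ((mem_iff_compVerts_eq hT).mp (mem_of_mem_edgesOf hT he ha)).symm

lemma delta_eq_sum_delta_inter_edgesOf (C : Finset G.E) :
    G.delta C = ∑ S ∈ G.components Finset.univ, G.delta (C ∩ G.edgesOf S) := by
  have hE := Finset.card_eq_sum_card_inter_of_existsUnique (s := C) (f := G.edgesOf)
    fun e _ => existsUnique_mem_edgesOf e
  have hV := Finset.card_eq_sum_card_inter_of_existsUnique (s := G.supp C) (f := id)
    fun v _ => existsUnique_mem_components v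
  rw [Finset.sum_congr rfl fun S hS => by rw [delta, supp_inter_edgesOf hS C]]
  simp only [delta, Finset.sum_sub_distrib, id] at hV ⊢
  rw [hE, hV]
  push_cast
  rfl

lemma compEdges_univ (v : G.V) :
    G.compEdges Finset.univ v = G.edgesOf (G.compVerts Finset.univ v) := by
  ext f
  simp [compEdges, edgesOf, mem_compVerts_iff]

lemma treeCount_univ : G.treeCount Finset.univ =
    ((G.components Finset.univ).filter fun S => (G.edgesOf S).card + 1 = S.card).card := by
  rw [treeCount, components, Finset.filter_image]
  simp only [IsTreeCompAt, compEdges_univ]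

lemma deltaG_add_treeCount : G.deltaG + G.treeCount Finset.univ =
    ∑ S ∈ G.components Finset.univ, max ((G.edgesOf S).card - S.card : ℤ) 0 := by
  have hE := Finset.card_eq_sum_card_inter_of_existsUnique (s := Finset.univ) (f := G.edgesOf)
    fun e _ => existsUnique_mem_edgesOf e
  have hV := Finset.card_eq_sum_card_inter_of_existsUnique (s := (Finset.univ : Finset G.V))
    (f := id) fun v _ => existsUnique_mem_components v
  simp only [Finset.univ_inter, Finset.card_univ, id] at hE hV
  rw [deltaG, treeCount_univ, Finset.card_filter, hE, hV]
  push_cast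
  rw [← Finset.sum_sub_distrib, ← Finset.sum_add_distrib]
  refine Finset.sum_congr rfl fun S hS => ?_
  have := (cyclomatic_nonneg (G.edgesOf S)).trans_eq (cyclomatic_edgesOf hS)
  split_ifs <;> omega

theorem delta_le_deltaG_add_treeCount (C : Finset G.E) :
    G.delta C ≤ G.deltaG + G.treeCount Finset.univ := by
  rw [delta_eq_sum_delta_inter_edgesOf, deltaG_add_treeCount]
  refine Finset.sum_le_sum fun S hS => ?_
  rcases (C ∩ G.edgesOf S).eq_empty_or_nonempty with h | h
  · rw [h, delta_empty]
    exact le_max_right _ _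
  · exact (delta_le_of_subset_edgesOf hS Finset.inter_subset_right h).trans (le_max_left _ _)

theorem exists_delta_eq_deltaG_add_treeCount :
    ∃ C, G.delta C = G.deltaG + G.treeCount Finset.univ := by
  refine ⟨Finset.univ.filter fun e => ∃ T ∈ G.components Finset.univ,
    T.card ≤ (G.edgesOf T).card ∧ e ∈ G.edgesOf T, ?_⟩
  rw [delta_eq_sum_delta_inter_edgesOf, deltaG_add_treeCount]
  refine Finset.sum_congr rfl fun S hS => ?_
  have hinter : Finset.univ.filter (fun e => ∃ T ∈ G.components Finset.univ,
      T.card ≤ (G.edgesOf T).card ∧ e ∈ G.edgesOf T) ∩ G.edgesOf S =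
      if S.card ≤ (G.edgesOf S).card then G.edgesOf S else ∅ := by
    ext e
    simp only [Finset.mem_inter, Finset.mem_filter, Finset.mem_univ, true_and]
    split_ifs with hSE
    · exact ⟨And.right, fun he => ⟨⟨S, hS, hSE, he⟩, he⟩⟩
    · refine ⟨fun ⟨⟨T, hT, hTE, heT⟩, heS⟩ => (hSE ?_).elim,
        fun h => absurd h (Finset.notMem_empty e)⟩
      rwa [(existsUnique_mem_edgesOf e).unique ⟨hS, heS⟩ ⟨hT, heT⟩]
  rw [hinter]
  split_ifs with hSE
  · have hE : (G.edgesOf S).Nonempty :=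
      Finset.card_pos.mp ((nonempty_of_mem_components hS).card_pos.trans_le hSE)
    rw [delta, supp_edgesOf hS hE, max_eq_left (by omega)]
  · rw [delta_empty, max_eq_right (by omega)]

lemma exists_isCircuitSet_of_le_delta {k : ℕ} (hk : 1 ≤ k) {C : Finset G.E}
    (hC : (k : ℤ) ≤ G.delta C) : ∃ D, G.IsCircuitSet k D := by
  obtain ⟨D, -, hDmin⟩ :=
    exists_minimal_le_of_wellFoundedLT (fun D : Finset G.E => (k : ℤ) ≤ G.delta D) C hC
  have hD_ne : D.Nonempty := Finset.nonempty_iff_ne_empty.mpr fun h => by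
    have := hDmin.prop
    rw [h, delta_empty] at this
    omega
  have hD_eq : G.delta D = k := by
    obtain ⟨e, he⟩ := hD_ne
    refine le_antisymm (not_lt.mp fun _ => hDmin.not_lt ?_ (Finset.erase_ssubset he)) hDmin.prop
    have := delta_sub_one_le_delta_erase he
    show (k : ℤ) ≤ _
    omega
  exact ⟨D, ⟨hD_ne, hD_eq⟩, fun D' hD' ⟨_, hD'k⟩ => hDmin.not_lt hD'k.ge hD'⟩

end Multigraph

theorem stmt_18_general (G : Multigraph) (k : ℕ) (hk : 1 ≤ k) :
    (∃ C : Finset G.E, G.IsCircuitSet k C) ↔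
      (k : ℤ) ≤ G.deltaG + G.treeCount Finset.univ := by
  constructor
  · rintro ⟨C, ⟨-, hC⟩, -⟩
    exact hC ▸ G.delta_le_deltaG_add_treeCount C
  · intro hle
    obtain ⟨C, hC⟩ := G.exists_delta_eq_deltaG_add_treeCount
    exact G.exists_isCircuitSet_of_le_delta hk (hC ▸ hle)

/-- `M_k(G)` has a circuit iff `k ≤ Δ(G) + cmp(F(G))`, where `cmp(F(G))` is the
number of tree components of `G`. -/
theorem stmt_18 (G : Multigraph) (k : ℕ) (hk : 1 ≤ k) (hni : G.NoIso) :
    (∃ C : Finset G.E, G.IsCircuitSet k C) ↔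
      (k : ℤ) ≤ G.deltaG + G.treeCount Finset.univ :=
  stmt_18_general G k hk
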